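/- Every Hom-alternative algebra (A,μ,α) is Hom-Jordan-admissible: its plus Hom-algebra A⁺ = (A, x∗y = (xy+yx)/2, α) satisfies as_{A⁺}(x∗x, α(y), α(x)) = 0 for all x,y ∈ A. -/
import Mathlib


variable {K A : Type*} [Field K] [CharZero K] [AddCommGroup A] [Module K A]

/-- Hom-associator of a multiplication μ with twisting map α. -/
def homAs (μ : A →ₗ[K] A →ₗ[K] A) (α : A →ₗ[K] A) (x y z : A) : A :=
  μ (μ x y) (α z) - μ (α x) (μ y z)

/-- Jordan product x ∗ y = (xy + yx)/2. -/
def star' (μ : A →ₗ[K] A →ₗ[K] A) (x y : A) : A := (2 : K)⁻¹ • (μ x y + μ y x)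

theorem stmt17 (μ : A →ₗ[K] A →ₗ[K] A) (α : A →ₗ[K] A)
    (hmult : ∀ x y : A, α (μ x y) = μ (α x) (α y))
    (h1 : ∀ x y : A, homAs μ α x x y = 0)
    (h2 : ∀ x y : A, homAs μ α x y y = 0)
    (h3 : ∀ x y : A, homAs μ α x y x = 0) :
    ∀ x y : A,
      star' μ (star' μ (star' μ x x) (α y)) (α (α x))
        - star' μ (α (star' μ x x)) (star' μ (α y) (α x)) = 0 := by
  intro x y
  have key : ∀ a b c : A, homAs μ α a b c = 0 →
      μ (μ a b) (α c) = μ (α a) (μ b c) := by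
    intro a b c h
    have := sub_eq_zero.mp h
    exact this
  -- e1 : (xx)(αy) = αx(xy)
  have e1 := key x x y (h1 x y)
  -- e2 : (yx)(αx) = αy(xx)
  have e2 := key y x x (h2 y x)
  -- e3 : (xy)(αx) = αx(yx)
  have e3 := key x y x (h3 x y)
  -- e4 : (αx(xy))α²x = α²x((xy)αx)
  have e4 := key (α x) (μ x y) (α x) (h3 (α x) (μ x y))
  -- e4' : (αx(yx))α²x = α²x((yx)αx)
  have e4' := key (α x) (μ y x) (α x) (h3 (α x) (μ y x))
  -- e5 : (αx·αx)α(xy) = α²x(αx(xy))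
  have e5 := key (α x) (α x) (μ x y) (h1 (α x) (μ x y))
  -- e6 : (αx·αx)α(yx) = α²x(αx(yx))
  have e6 := key (α x) (α x) (μ y x) (h1 (α x) (μ y x))
  -- e7 : ((yx)αx)α²x = α(yx)(αx·αx)
  have e7 := key (μ y x) (α x) (α x) (h2 (μ y x) (α x))
  -- e8 : ((xy)αx)α²x = α(xy)(αx·αx)
  have e8 := key (μ x y) (α x) (α x) (h2 (μ x y) (α x))
  have hxx : star' μ x x = μ x x := by
    rw [star', ← two_smul K (μ x x), smul_smul]
    norm_num
  rw [hxx]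
  simp only [star', hmult, map_add, map_smul, LinearMap.add_apply,
    LinearMap.smul_apply, smul_add]
  rw [e1]
  have A1 : μ (μ (α x) (μ x y)) (α (α x)) = μ (μ (α x) (α x)) (μ (α y) (α x)) := by
    rw [e4, e3, ← e6, hmult]
  have A2 : μ (μ (α y) (μ x x)) (α (α x)) = μ (μ (α y) (α x)) (μ (α x) (α x)) := by
    rw [← e2, e7, hmult]
  have A3 : μ (α (α x)) (μ (α x) (μ x y)) = μ (μ (α x) (α x)) (μ (α x) (α y)) := by
    rw [← e5, hmult]
  have A4 : μ (α (α x)) (μ (α y) (μ x x)) = μ (μ (α x) (α y)) (μ (α x) (α x)) := by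
    rw [← e2, ← e4', ← e3, e8, hmult]
  rw [A1, A2, A3, A4]
  module
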